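/- Let B = O[u,v,S,T]/(uv − π, uS + vT) (an integral domain), and let B_S denote the localization of B at the powers of the image of S. Then the O-algebra homomorphism O[S',T',Y] → B_S defined by S' ↦ S, T' ↦ T, Y ↦ v/S has kernel exactly the principal ideal (S'·T'·Y² + π); moreover, in B_S one has u = −(v/S)·T, so that the ideal generated by the images of T and u in the image subalgebra is principal, generated by T. In particular the blow-up chart B[v/S] of B is isomorphic as an O-algebra to O[S',T',Y]/(S'T'Y² + π). -/

import Mathlib

open MvPolynomial

noncomputable section

/-- The ideal `(uv - π, uS + vT)` of `O[u,v,S,T]`, with variables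
`u = X 0`, `v = X 1`, `S = X 2`, `T = X 3`. -/
def idealB (O : Type*) [CommRing O] (π : O) : Ideal (MvPolynomial (Fin 4) O) :=
  Ideal.span {X 0 * X 1 - C π, X 0 * X 2 + X 1 * X 3}

/-- The `O`-algebra map `O[S',T',Y] → B_S`, `S' ↦ S`, `T' ↦ T`, `Y ↦ v/S`, where `B_S` is
(any model of) the localization of `B = O[u,v,S,T]/(uv - π, uS + vT)` at the powers of
(the image of) `S`. The variables of `O[S',T',Y]` are `S' = X 0`, `T' = X 1`, `Y = X 2`. -/
def chartMapS (O : Type*) [CommRing O] (π : O)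
    (BS : Type*) [CommRing BS] [Algebra (MvPolynomial (Fin 4) O ⧸ idealB O π) BS]
    [Algebra O BS] [IsScalarTower O (MvPolynomial (Fin 4) O ⧸ idealB O π) BS]
    [IsLocalization.Away (Ideal.Quotient.mk (idealB O π) (X 2)) BS] :
    MvPolynomial (Fin 3) O →ₐ[O] BS :=
  MvPolynomial.aeval
    ![algebraMap _ BS (Ideal.Quotient.mk (idealB O π) (X 2)),
      algebraMap _ BS (Ideal.Quotient.mk (idealB O π) (X 3)),
      algebraMap _ BS (Ideal.Quotient.mk (idealB O π) (X 1)) *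
        IsLocalization.Away.invSelf (S := BS) (Ideal.Quotient.mk (idealB O π) (X 2))]

theorem primeX0 (O : Type*) [CommRing O] [IsDomain O] :
    Prime (X 0 : MvPolynomial (Fin 3) O) := by
  rw [← MulEquiv.prime_iff (MvPolynomial.finSuccEquiv O 2).toRingEquiv.toMulEquiv]
  simpa [MvPolynomial.finSuccEquiv_X_zero] using
    (Polynomial.prime_X (R := MvPolynomial (Fin 2) O))

theorem X0_not_dvd (O : Type*) [CommRing O] {π : O} (hπ : π ≠ 0) :
    ¬ (X 0 : MvPolynomial (Fin 3) O) ∣ (X 0 * X 1 * X 2 ^ 2 + C π) := by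
  rintro ⟨c, hc⟩
  apply hπ
  have := congrArg (MvPolynomial.eval (fun _ => (0 : O))) hc
  simpa using this

set_option maxHeartbeats 1000000 in
theorem stmt_13' (O : Type*) [CommRing O] [IsDomain O]
    (π : O) (hπ : π ≠ 0)
    (BS : Type*) [CommRing BS] [Algebra (MvPolynomial (Fin 4) O ⧸ idealB O π) BS]
    [Algebra O BS] [IsScalarTower O (MvPolynomial (Fin 4) O ⧸ idealB O π) BS]
    [IsLocalization.Away (Ideal.Quotient.mk (idealB O π) (X 2)) BS] :
    RingHom.ker (chartMapS O π BS : MvPolynomial (Fin 3) O →+* BS) =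
      Ideal.span {X 0 * X 1 * X 2 ^ 2 + C π} ∧
    algebraMap _ BS (Ideal.Quotient.mk (idealB O π) (X 0)) =
      -((algebraMap _ BS (Ideal.Quotient.mk (idealB O π) (X 1)) *
          IsLocalization.Away.invSelf (S := BS) (Ideal.Quotient.mk (idealB O π) (X 2))) *
        algebraMap _ BS (Ideal.Quotient.mk (idealB O π) (X 3))) := by
  set A := MvPolynomial (Fin 4) O ⧸ idealB O π with hA
  set q : MvPolynomial (Fin 4) O →+* A := Ideal.Quotient.mk (idealB O π) with hqdef
  set g : A →+* BS := algebraMap A BS with hgdef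
  set w : BS := IsLocalization.Away.invSelf (S := BS) (q (X 2)) with hwdef
  have hsw : g (q (X 2)) * w = 1 := IsLocalization.Away.mul_invSelf _
  have hrel : g (q (X 0)) * g (q (X 2)) + g (q (X 1)) * g (q (X 3)) = 0 := by
    simp only [← map_mul, ← map_add]
    rw [show q (X 0 * X 2 + X 1 * X 3) = 0 from
      Ideal.Quotient.eq_zero_iff_mem.mpr (Ideal.subset_span (Or.inr rfl)), map_zero]
  have huv : g (q (X 0)) * g (q (X 1)) = algebraMap O BS π := by
    rw [← map_mul, ← map_mul]
    have h1 : (X 0 * X 1 : MvPolynomial (Fin 4) O) = (X 0 * X 1 - C π) + C π := by ring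
    rw [h1, map_add,
      show q (X 0 * X 1 - C π) = 0 from
        Ideal.Quotient.eq_zero_iff_mem.mpr (Ideal.subset_span (Or.inl rfl)),
      zero_add,
      show (C π : MvPolynomial (Fin 4) O) = algebraMap O _ π from rfl,
      Ideal.Quotient.mk_algebraMap, ← IsScalarTower.algebraMap_apply]
  have part2 : g (q (X 0)) = -((g (q (X 1)) * w) * g (q (X 3))) := by
    linear_combination w * hrel - g (q (X 0)) * hsw
  have hkey : g (q (X 1)) ^ 2 * g (q (X 3)) * w = -(algebraMap O BS π) := by
    linear_combination g (q (X 1)) * part2 - huv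
  have expand : chartMapS O π BS (X 0 * X 1 * X 2 ^ 2 + C π) =
      g (q (X 2)) * g (q (X 3)) * (g (q (X 1)) * w) ^ 2 + algebraMap O BS π := by
    simp [chartMapS]; rfl
  have hfzero : chartMapS O π BS (X 0 * X 1 * X 2 ^ 2 + C π) = 0 := by
    rw [expand]
    linear_combination (g (q (X 2)) * w) * hkey - (algebraMap O BS π) * hsw
  refine ⟨?_, part2⟩
  -- kernel
  set J : Ideal (MvPolynomial (Fin 3) O) := Ideal.span {X 0 * X 1 * X 2 ^ 2 + C π} with hJ
  set ψ0 : MvPolynomial (Fin 4) O →ₐ[O] (MvPolynomial (Fin 3) O ⧸ J) :=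
    (Ideal.Quotient.mkₐ O J).comp
      (MvPolynomial.aeval ![-(X 2 * X 1), X 2 * X 0, X 0, X 1]) with hψ0
  have hker0 : ∀ a ∈ idealB O π, ψ0 a = 0 := by
    have hle : idealB O π ≤ RingHom.ker ψ0 := by
      rw [idealB, Ideal.span_le]
      rintro x (rfl | rfl) <;> rw [SetLike.mem_coe, RingHom.mem_ker]
      · have : (MvPolynomial.aeval
            (![-(X 2 * X 1), X 2 * X 0, X 0, X 1] : Fin 4 → MvPolynomial (Fin 3) O))
            (X 0 * X 1 - C π) = -(X 0 * X 1 * X 2 ^ 2 + C π) := by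
          simp only [map_sub, map_mul, aeval_X, aeval_C, MvPolynomial.algebraMap_eq]
          simp only [Matrix.cons_val_zero, Matrix.cons_val_one, Matrix.head_cons]
          ring
        simp only [hψ0, AlgHom.coe_comp, Function.comp_apply, this]
        rw [show (Ideal.Quotient.mkₐ O J) (-(X 0 * X 1 * X 2 ^ 2 + C π)) = 0 from
          Ideal.Quotient.eq_zero_iff_mem.mpr (neg_mem (Ideal.subset_span rfl))]
      · have : (MvPolynomial.aeval
            (![-(X 2 * X 1), X 2 * X 0, X 0, X 1] : Fin 4 → MvPolynomial (Fin 3) O))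
            (X 0 * X 2 + X 1 * X 3 : MvPolynomial (Fin 4) O) = 0 := by
          simp only [map_add, map_mul, aeval_X]
          simp only [Matrix.cons_val_zero, Matrix.cons_val_one, Matrix.head_cons]
          rw [show (![-(X 2 * X 1), X 2 * X 0, X 0, X 1] : Fin 4 → MvPolynomial (Fin 3) O) 2
              = X 0 from rfl,
            show (![-(X 2 * X 1), X 2 * X 0, X 0, X 1] : Fin 4 → MvPolynomial (Fin 3) O) 3
              = X 1 from rfl]
          ring
        simp [hψ0, this]
        ring
    exact fun a ha => hle ha
  set ψ : A →ₐ[O] (MvPolynomial (Fin 3) O ⧸ J) :=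
    Ideal.Quotient.liftₐ (idealB O π) ψ0 hker0 with hψ
  have hψq : ∀ x, ψ (q x) = ψ0 x := fun x => by
    rw [hψ, Ideal.Quotient.liftₐ_apply]; exact Ideal.Quotient.lift_mk _ _ _
  set Cl := Localization.Away ((Ideal.Quotient.mk J) (X 0)) with hCl
  set ψ' : A →+* Cl := (algebraMap _ Cl).comp ψ.toRingHom with hψ'
  have hψS : ψ (q (X 2)) = Ideal.Quotient.mk J (X 0) := by
    rw [hψq, hψ0]
    simp only [AlgHom.coe_comp, Function.comp_apply, aeval_X]
    rfl
  have hunit : IsUnit (ψ' (q (X 2))) := by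
    rw [hψ', RingHom.comp_apply]
    rw [show (ψ.toRingHom (q (X 2))) = Ideal.Quotient.mk J (X 0) from hψS]
    exact IsLocalization.map_units Cl ⟨_, Submonoid.mem_powers _⟩
  set χ : BS →+* Cl := IsLocalization.Away.lift (S := BS) (q (X 2)) (g := ψ') hunit with hχdef
  have hχ : ∀ a : A, χ (g a) = ψ' a := fun a => IsLocalization.Away.lift_eq _ hunit a
  have hcomp : χ.comp ((chartMapS O π BS : MvPolynomial (Fin 3) O →+* BS)) =
      (algebraMap _ Cl).comp (Ideal.Quotient.mk J) := by
    apply MvPolynomial.ringHom_ext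
    · intro a
      have h1 : chartMapS O π BS (C a) = algebraMap O BS a := by
        simp [chartMapS]
      have h2 : algebraMap O BS a = g (algebraMap O A a) :=
        IsScalarTower.algebraMap_apply O A BS a
      simp only [RingHom.comp_apply, RingHom.coe_coe, h1, h2, hχ]
      rw [hψ', RingHom.comp_apply]
      rw [show ψ.toRingHom (algebraMap O A a) = algebraMap O _ a from ψ.commutes a]
      rw [show Ideal.Quotient.mk J (C a) = algebraMap O _ a from
        (Ideal.Quotient.mk_algebraMap O J a)]
    · intro i
      fin_cases i
      · show χ ((chartMapS O π BS) (X 0)) = (algebraMap _ Cl) ((Ideal.Quotient.mk J) (X 0))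
        have h1 : chartMapS O π BS (X 0) = g (q (X 2)) := by simp [chartMapS]; rfl
        simp only [RingHom.comp_apply, RingHom.coe_coe, h1, hχ]
        rw [hψ', RingHom.comp_apply,
          show ψ.toRingHom (q (X 2)) = Ideal.Quotient.mk J (X 0) from hψS]
      · show χ ((chartMapS O π BS) (X 1)) = (algebraMap _ Cl) ((Ideal.Quotient.mk J) (X 1))
        have h1 : chartMapS O π BS (X 1) = g (q (X 3)) := by simp [chartMapS]; rfl
        have hψT : ψ (q (X 3)) = Ideal.Quotient.mk J (X 1) := by
          rw [hψq, hψ0]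
          simp only [AlgHom.coe_comp, Function.comp_apply, aeval_X]
          rfl
        simp only [RingHom.comp_apply, RingHom.coe_coe, h1, hχ]
        rw [hψ', RingHom.comp_apply,
          show ψ.toRingHom (q (X 3)) = Ideal.Quotient.mk J (X 1) from hψT]
      · show χ ((chartMapS O π BS) (X 2)) = (algebraMap _ Cl) ((Ideal.Quotient.mk J) (X 2))
        have h1 : chartMapS O π BS (X 2) = g (q (X 1)) * w := by simp [chartMapS]; rfl
        have hψv : ψ (q (X 1)) = Ideal.Quotient.mk J (X 2 * X 0) := by
          rw [hψq, hψ0]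
          simp only [AlgHom.coe_comp, Function.comp_apply, aeval_X]
          rfl
        simp only [RingHom.comp_apply, RingHom.coe_coe, h1]
        apply hunit.mul_left_cancel
        have lhs : ψ' (q (X 2)) * χ (g (q (X 1)) * w) = χ (g (q (X 1))) := by
          rw [← hχ (q (X 2)), ← map_mul]
          congr 1
          linear_combination g (q (X 1)) * hsw
        rw [lhs, hχ, hψ', RingHom.comp_apply,
          show ψ.toRingHom (q (X 1)) = Ideal.Quotient.mk J (X 2 * X 0) from hψv,
          RingHom.comp_apply,
          show ψ.toRingHom (q (X 2)) = Ideal.Quotient.mk J (X 0) from hψS]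
        rw [← map_mul, ← map_mul]
        rw [mul_comm (X 2 : MvPolynomial (Fin 3) O) (X 0)]
  have hX0nzd : (Ideal.Quotient.mk J (X 0)) ∈ nonZeroDivisors (MvPolynomial (Fin 3) O ⧸ J) := by
    rw [mem_nonZeroDivisors_iff_right]
    intro z hz
    obtain ⟨h, rfl⟩ := Ideal.Quotient.mk_surjective z
    rw [← map_mul, Ideal.Quotient.eq_zero_iff_mem, hJ, Ideal.mem_span_singleton] at hz
    obtain ⟨c, hc⟩ := hz
    have hdvd : (X 0 : MvPolynomial (Fin 3) O) ∣ (X 0 * X 1 * X 2 ^ 2 + C π) * c :=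
      ⟨h, by linear_combination -hc⟩
    rcases (primeX0 O).2.2 _ _ hdvd with h1 | h1
    · exact absurd h1 (X0_not_dvd O hπ)
    · obtain ⟨d, rfl⟩ := h1
      have : h = (X 0 * X 1 * X 2 ^ 2 + C π) * d := by
        have h0 : (X 0 : MvPolynomial (Fin 3) O) ≠ 0 := (primeX0 O).1
        apply mul_left_cancel₀ h0
        linear_combination hc
      rw [Ideal.Quotient.eq_zero_iff_mem, hJ, Ideal.mem_span_singleton]
      exact ⟨d, this⟩
  have hinj : Function.Injective (algebraMap (MvPolynomial (Fin 3) O ⧸ J) Cl) :=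
    IsLocalization.injective Cl (Submonoid.powers_le.mpr hX0nzd)
  apply le_antisymm
  · intro z hz
    have hz' : chartMapS O π BS z = 0 := hz
    have h0 : algebraMap _ Cl (Ideal.Quotient.mk J z) = 0 := by
      have h := RingHom.congr_fun hcomp z
      simp only [RingHom.comp_apply, RingHom.coe_coe] at h
      rw [hz', map_zero] at h
      exact h.symm
    have : Ideal.Quotient.mk J z = 0 := hinj (by rw [map_zero]; exact h0)
    exact Ideal.Quotient.eq_zero_iff_mem.mp this
  · rw [Ideal.span_le]
    rintro x rfl
    rw [SetLike.mem_coe, RingHom.mem_ker]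
    exact hfzero

/-- the `O`-algebra map `O[S',T',Y] → B_S`, `S' ↦ S`, `T' ↦ T`, `Y ↦ v/S`
has kernel exactly `(S'T'Y² + π)`; in `B_S` one has `u = -(v/S)·T`, so that the ideal
generated by the images of `T` and `u` in the image subalgebra is principal, generated by
`T`; in particular the blow-up chart `B[v/S]` is `O`-algebra isomorphic to
`O[S',T',Y]/(S'T'Y² + π)`. -/
theorem stmt_13 (O : Type*) [CommRing O] [IsDomain O] [IsDiscreteValuationRing O]
    [IsAdicComplete (IsLocalRing.maximalIdeal O) O]
    (p : ℕ) [Fact p.Prime] (hp : p ≠ 2)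
    [IsAlgClosed (IsLocalRing.ResidueField O)] [CharP (IsLocalRing.ResidueField O) p]
    (π : O) (hπ : Irreducible π)
    [IsDomain (MvPolynomial (Fin 4) O ⧸ idealB O π)]
    (BS : Type*) [CommRing BS] [Algebra (MvPolynomial (Fin 4) O ⧸ idealB O π) BS]
    [Algebra O BS] [IsScalarTower O (MvPolynomial (Fin 4) O ⧸ idealB O π) BS]
    [IsLocalization.Away (Ideal.Quotient.mk (idealB O π) (X 2)) BS] :
    -- the kernel is exactly `(S'T'Y² + π)`
    RingHom.ker (chartMapS O π BS : MvPolynomial (Fin 3) O →+* BS) =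
      Ideal.span {X 0 * X 1 * X 2 ^ 2 + C π} ∧
    -- in `B_S` one has `u = -(v/S)·T`
    algebraMap _ BS (Ideal.Quotient.mk (idealB O π) (X 0)) =
      -((algebraMap _ BS (Ideal.Quotient.mk (idealB O π) (X 1)) *
          IsLocalization.Away.invSelf (S := BS) (Ideal.Quotient.mk (idealB O π) (X 2))) *
        algebraMap _ BS (Ideal.Quotient.mk (idealB O π) (X 3))) ∧
    -- in the image subalgebra, the ideal generated by (the images of) `T` and `u` is
    -- principal, generated by `T`
    (∀ (hT : algebraMap _ BS (Ideal.Quotient.mk (idealB O π) (X 3)) ∈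
          (chartMapS O π BS).range)
        (hu : algebraMap _ BS (Ideal.Quotient.mk (idealB O π) (X 0)) ∈
          (chartMapS O π BS).range),
      Ideal.span {(⟨_, hT⟩ : (chartMapS O π BS).range), ⟨_, hu⟩} =
        Ideal.span {(⟨_, hT⟩ : (chartMapS O π BS).range)}) ∧
    -- the blow-up chart `B[v/S]` is `O`-algebra isomorphic to `O[S',T',Y]/(S'T'Y² + π)`
    Nonempty ((MvPolynomial (Fin 3) O ⧸
        Ideal.span {(X 0 * X 1 * X 2 ^ 2 : MvPolynomial (Fin 3) O) + C π})
      ≃ₐ[O] (chartMapS O π BS).range) := by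
  obtain ⟨part1, part2⟩ := stmt_13' O π hπ.ne_zero BS
  refine ⟨part1, part2, ?_, ?_⟩
  · intro hT hu
    have hcmem : -(algebraMap _ BS (Ideal.Quotient.mk (idealB O π) (X 1)) *
        IsLocalization.Away.invSelf (S := BS) (Ideal.Quotient.mk (idealB O π) (X 2))) ∈
        (chartMapS O π BS).range := ⟨-(X 2), by simp [chartMapS]⟩
    apply le_antisymm
    · rw [Ideal.span_le]
      rintro x hx
      simp only [Set.mem_insert_iff, Set.mem_singleton_iff] at hx
      rcases hx with rfl | rfl
      · exact Ideal.subset_span rfl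
      · rw [SetLike.mem_coe, Ideal.mem_span_singleton]
        refine ⟨⟨_, hcmem⟩, Subtype.ext ?_⟩
        show algebraMap _ BS (Ideal.Quotient.mk (idealB O π) (X 0)) =
          algebraMap _ BS (Ideal.Quotient.mk (idealB O π) (X 3)) *
            -(algebraMap _ BS (Ideal.Quotient.mk (idealB O π) (X 1)) *
              IsLocalization.Away.invSelf (S := BS) (Ideal.Quotient.mk (idealB O π) (X 2)))
        rw [part2]; ring
    · exact Ideal.span_mono (Set.singleton_subset_iff.mpr (Set.mem_insert _ _))
  · exact ⟨(Ideal.quotientEquivAlgOfEq O part1.symm).trans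
      (Ideal.quotientKerEquivRange (chartMapS O π BS))⟩
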